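/- Let f : ℝ → ℝ be continuously differentiable with f(z) = 0 for all sufficiently negative z. Then ∫_{-∞}^0 f(z)²/(1-z)² dz ≤ 2·f(0)² + 8·∫_{-∞}^0 f'(z)² dz. -/

import Mathlib

/-!
Differentiating `f² / (c - z)` gives `2 f f' / (c - z) + f² / (c - z)²`, and by AM-GM the cross
term is at least `-½ f² / (c - z)² - 2 f'²`. Integrating over `[a, b]` with `b < c` therefore
bounds `½ ∫ f² / (c - z)²` by the boundary term `f(b)² / (c - b)` plus `2 ∫ f'²`.
-/

open MeasureTheory Set

theorem hasDerivAt_sq_div_sub {f : ℝ → ℝ} {f' c z : ℝ} (hf : HasDerivAt f f' z) (hz : z ≠ c) :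
    HasDerivAt (fun x => f x ^ 2 / (c - x))
      (2 * f z * f' / (c - z) + f z ^ 2 / (c - z) ^ 2) z := by
  have hcz : c - z ≠ 0 := sub_ne_zero.2 hz.symm
  refine ((hf.fun_pow 2).fun_div ((hasDerivAt_id z).const_sub c) hcz).congr_deriv ?_
  simp only [id]
  field_simp
  ring

theorem integral_sq_div_sub_sq_le {f f' : ℝ → ℝ} {a b c : ℝ} (hab : a ≤ b) (hbc : b < c)
    (hf : ∀ x ∈ Icc a b, HasDerivAt f (f' x) x) (hf' : ContinuousOn f' (Icc a b)) :
    ∫ z in a..b, f z ^ 2 / (c - z) ^ 2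
      ≤ 2 * (f b ^ 2 / (c - b)) + 4 * ∫ z in a..b, f' z ^ 2 := by
  have hc : ∀ z ∈ Icc a b, c - z ≠ 0 := fun z hz => by linarith [hz.2]
  have hfc : ContinuousOn f (Icc a b) := fun x hx => (hf x hx).continuousAt.continuousWithinAt
  have hsub : ContinuousOn (fun z : ℝ => c - z) (Icc a b) := by fun_prop
  have hg : ContinuousOn (fun z => f z ^ 2 / (c - z) ^ 2) (Icc a b) :=
    (hfc.pow 2).div (hsub.pow 2) fun z hz => pow_ne_zero 2 (hc z hz)
  have hD : ContinuousOn (fun z => 2 * f z * f' z / (c - z) + f z ^ 2 / (c - z) ^ 2) (Icc a b) :=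
    (((continuousOn_const.mul hfc).mul hf').div hsub hc).add hg
  have hh : ContinuousOn (fun z => f' z ^ 2) (Icc a b) := hf'.pow 2
  rw [← uIcc_of_le hab] at hg hD hh
  have ftc : ∫ z in a..b, (2 * f z * f' z / (c - z) + f z ^ 2 / (c - z) ^ 2)
      = f b ^ 2 / (c - b) - f a ^ 2 / (c - a) := by
    refine intervalIntegral.integral_eq_sub_of_hasDerivAt (f := fun x => f x ^ 2 / (c - x))
      (fun z hz => ?_) hD.intervalIntegrable
    rw [uIcc_of_le hab] at hz
    exact hasDerivAt_sq_div_sub (hf z hz) (sub_ne_zero.1 (hc z hz)).symm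
  have hgi : IntervalIntegrable (fun z => f z ^ 2 / (c - z) ^ 2) volume a b :=
    hg.intervalIntegrable
  have hDi := hD.intervalIntegrable (μ := volume)
  have hhi := hh.intervalIntegrable (μ := volume)
  have hpt : ∀ z ∈ Icc a b, f z ^ 2 / (c - z) ^ 2
      ≤ 2 * (2 * f z * f' z / (c - z) + f z ^ 2 / (c - z) ^ 2) + 4 * f' z ^ 2 := fun z hz => by
    have hcross : 2 * f z * f' z / (c - z) = 2 * (f z / (c - z)) * f' z := by field_simp
    rw [hcross, ← div_pow]
    nlinarith [sq_nonneg (f z / (c - z) + 2 * f' z)]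
  have hmono := intervalIntegral.integral_mono_on hab hgi
    ((hDi.const_mul 2).add (hhi.const_mul 4)) hpt
  rw [intervalIntegral.integral_add (hDi.const_mul 2) (hhi.const_mul 4),
    intervalIntegral.integral_const_mul, intervalIntegral.integral_const_mul, ftc] at hmono
  have ha : 0 ≤ f a ^ 2 / (c - a) := div_nonneg (sq_nonneg _) (by linarith)
  linarith

theorem setIntegral_Iic_eq_intervalIntegral {g : ℝ → ℝ} {μ : Measure ℝ} {a b : ℝ} (hab : a ≤ b)
    (hg : ∀ z ≤ a, g z = 0) : ∫ z in Iic b, g z ∂μ = ∫ z in a..b, g z ∂μ := by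
  rw [intervalIntegral.integral_of_le hab]
  exact setIntegral_eq_of_subset_of_forall_sdiff_eq_zero measurableSet_Iic Ioc_subset_Iic_self
    fun z hz => hg z (not_lt.1 fun h => hz.2 ⟨h, hz.1⟩)

theorem stmt_18 (f : ℝ → ℝ) (hf : ContDiff ℝ 1 f)
    (hvanish : ∃ M : ℝ, ∀ z ≤ M, f z = 0) :
    ∫ z in Set.Iic (0 : ℝ), f z ^ 2 / (1 - z) ^ 2
      ≤ 2 * f 0 ^ 2 + 8 * ∫ z in Set.Iic (0 : ℝ), deriv f z ^ 2 := by
  obtain ⟨M, hM⟩ := hvanish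
  obtain ⟨a, ha0, haM⟩ : ∃ a ≤ 0, a < M :=
    ⟨min M 0 - 1, by linarith [min_le_right M 0], by linarith [min_le_left M 0]⟩
  have hf0 : ∀ z ≤ a, f z ^ 2 / (1 - z) ^ 2 = 0 := fun z hz => by simp [hM z (by linarith)]
  have hf'0 : ∀ z ≤ a, deriv f z ^ 2 = 0 := fun z hz => by
    have : f =ᶠ[nhds z] fun _ => 0 :=
      Filter.eventually_of_mem (Iio_mem_nhds (hz.trans_lt haM)) fun x hx => hM x hx.le
    simp [this.deriv_eq]
  have hbound := integral_sq_div_sub_sq_le (f := f) (c := 1) ha0 one_pos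
    (fun x _ => (hf.differentiable one_ne_zero x).hasDerivAt)
    (hf.continuous_deriv le_rfl).continuousOn
  have hpos : 0 ≤ ∫ z in a..0, deriv f z ^ 2 :=
    intervalIntegral.integral_nonneg ha0 fun z _ => sq_nonneg _
  rw [setIntegral_Iic_eq_intervalIntegral ha0 hf0, setIntegral_Iic_eq_intervalIntegral ha0 hf'0]
  norm_num at hbound
  linarith
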